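/- arXiv:2601.04542 — 3 statements merged into one kernel-verified Lean document; each statement's English description precedes it below -/
import Mathlib

section
/- Let F̃ : ℝ → ℝ be convex, let d̄ ≥ 0 and C ∈ ℝ be constants. Then the function y(h) = (F̃(h + d̄) − C)/h is quasi-convex on (0, ∞), i.e., every sublevel set {h > 0 : y(h) ≤ γ} is convex. -/
theorem convex_setOf_pos_div_le {𝕜 : Type*} [Field 𝕜] [LinearOrder 𝕜] [IsStrictOrderedRing 𝕜]
    {f : 𝕜 → 𝕜} (hf : ConvexOn 𝕜 (Set.Ioi 0) f) (γ : 𝕜) :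
    Convex 𝕜 {x | 0 < x ∧ f x / x ≤ γ} := by
  have hg : ConvexOn 𝕜 (Set.Ioi 0) (fun x => f x - γ * x) :=
    hf.sub ((LinearMap.mul 𝕜 𝕜 γ).concaveOn (convex_Ioi 0))
  have hset : {x | 0 < x ∧ f x / x ≤ γ} = {x ∈ Set.Ioi 0 | f x - γ * x ≤ 0} := by
    ext x
    exact and_congr_right fun hx => by rw [div_le_iff₀ hx, sub_nonpos]
  exact hset ▸ hg.convex_le 0

theorem stmt2_general (F : ℝ → ℝ) (hF : ConvexOn ℝ Set.univ F)
    (dbar : ℝ) (C : ℝ) (γ : ℝ) :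
    Convex ℝ {h : ℝ | 0 < h ∧ (F (h + dbar) - C) / h ≤ γ} := by
  have hshift : ConvexOn ℝ Set.univ (fun h => F (h + dbar) - C) := by
    simpa only [Set.preimage_univ, Function.comp_def, Pi.add_def, sub_eq_add_neg] using (hF.translate_left dbar).add_const (-C)
  exact convex_setOf_pos_div_le (hshift.subset (Set.subset_univ _) (convex_Ioi 0)) γ

theorem stmt2 (F : ℝ → ℝ) (hF : ConvexOn ℝ Set.univ F)
    (dbar : ℝ) (hd : 0 ≤ dbar) (C : ℝ) (γ : ℝ) :
    Convex ℝ {h : ℝ | 0 < h ∧ (F (h + dbar) - C) / h ≤ γ} :=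
  stmt2_general F hF dbar C γ
end

section
/- For constants α, β, τ > 0, d̄ ≥ 0 and c, let f̃(x) = c − α e^{−βτx}, F̃(h) = ∫_0^h f̃, and C = F̃(d̄) (taking the expected delay deterministic, equal to d̄). Then the utility U(h) = [h·f̃(h + d̄) − (F̃(h + d̄) − C)]/h² simplifies to U(h) = −(α/h)e^{−βτ(h+d̄)} − (α/(βτh²))·e^{−βτd̄}(e^{−βτh} − 1). -/
lemma aux_exp_int (k u : ℝ) (hk : k ≠ 0) :
    ∫ x in (0:ℝ)..u, Real.exp (k * x) = (Real.exp (k * u) - 1) / k := by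
  rw [intervalIntegral.integral_comp_mul_left (fun x => Real.exp x) hk]
  simp [integral_exp, div_eq_inv_mul]

lemma aux_F (k c α u : ℝ) (hk : k ≠ 0) :
    ∫ x in (0:ℝ)..u, (c - α * Real.exp (k * x)) =
      c * u - α * ((Real.exp (k * u) - 1) / k) := by
  have hcont : Continuous fun x : ℝ => α * Real.exp (k * x) := by continuity
  rw [intervalIntegral.integral_sub intervalIntegrable_const (hcont.intervalIntegrable 0 u),
    intervalIntegral.integral_const_mul, aux_exp_int k u hk]
  simp [mul_comm]

theorem stmt9 (α β τ c dbar : ℝ) (hα : 0 < α) (hβ : 0 < β) (hτ : 0 < τ)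
    (hd : 0 ≤ dbar)
    (ft : ℝ → ℝ) (hft : ft = fun x => c - α * Real.exp (-β * τ * x))
    (F : ℝ → ℝ) (hF : F = fun h => ∫ x in (0:ℝ)..h, ft x)
    (h : ℝ) (hpos : 0 < h) :
    (h * ft (h + dbar) - (F (h + dbar) - F dbar)) / h ^ 2 =
      -(α / h) * Real.exp (-β * τ * (h + dbar)) -
        (α / (β * τ * h ^ 2)) * Real.exp (-β * τ * dbar) *
          (Real.exp (-β * τ * h) - 1) := by
  have hbt : β * τ ≠ 0 := by positivity
  have hk : -β * τ ≠ 0 := by simpa [neg_mul] using neg_ne_zero.mpr hbt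
  subst hft hF
  simp only [aux_F (-β * τ) c α _ hk]
  have he : Real.exp (-β * τ * (h + dbar)) =
      Real.exp (-β * τ * h) * Real.exp (-β * τ * dbar) := by
    rw [← Real.exp_add]; ring_nf
  rw [he]
  field_simp
  ring
end

section
/- Let f̃ : ℝ → ℝ be non-decreasing, differentiable, and convex, with d̄ ≥ 0. Then U(h) = [h·f̃(h+d̄) − ∫_{d̄}^{h+d̄} f̃(x)dx]/h² is non-decreasing in h on (0, ∞). -/
/-!
With `N h = h f̃(h + d̄) - ∫_{d̄}^{h + d̄} f̃` we have `U = N / h²` and `N' h = h f̃'(h + d̄)`, so `U' ≥ 0`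
reduces to `2 N h ≤ h² f̃'(h + d̄)`. This is the tangent-line bound `f̃ b - f̃ x ≤ f̃' b (b - x)` of a
convex function, integrated over `x ∈ [d̄, b]` with `b = h + d̄`.
-/

open Set intervalIntegral

lemma ConvexOn.sub_le_deriv_mul_sub {f : ℝ → ℝ} {S : Set ℝ} {x y : ℝ} (hf : ConvexOn ℝ S f)
    (hx : x ∈ S) (hy : y ∈ S) (hxy : x ≤ y) (hfy : DifferentiableAt ℝ f y) :
    f y - f x ≤ deriv f y * (y - x) := by
  rcases hxy.eq_or_lt with rfl | hlt
  · simp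
  · have hslope := hf.slope_le_deriv hx hy hlt hfy
    rwa [slope_def_field, div_le_iff₀ (sub_pos.mpr hlt)] at hslope

lemma ConvexOn.mul_sub_integral_le {f : ℝ → ℝ} {a b : ℝ} (hf : ConvexOn ℝ univ f)
    (hfb : DifferentiableAt ℝ f b) (hab : a ≤ b) :
    (b - a) * f b - ∫ x in a..b, f x ≤ deriv f b * (b - a) ^ 2 / 2 := by
  have hcont : Continuous f := continuousOn_univ.mp (hf.continuousOn isOpen_univ)
  have hlhs : ∫ x in a..b, (f b - f x) = (b - a) * f b - ∫ x in a..b, f x := by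
    rw [integral_sub intervalIntegrable_const (hcont.intervalIntegrable _ _), integral_const,
      smul_eq_mul]
  have hrhs : ∫ x in a..b, deriv f b * (b - x) = deriv f b * (b - a) ^ 2 / 2 := by
    rw [integral_const_mul, integral_comp_sub_left (fun x => x), integral_id]
    ring
  rw [← hlhs, ← hrhs]
  refine integral_mono_on hab ((continuous_const.sub hcont).intervalIntegrable _ _)
    ((by fun_prop : Continuous fun x => deriv f b * (b - x)).intervalIntegrable _ _) fun x hx => ?_
  exact hf.sub_le_deriv_mul_sub trivial trivial hx.2 hfb

lemma hasDerivAt_mul_comp_add_sub_integral {f : ℝ → ℝ} (a h : ℝ) (hf : Continuous f)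
    (hfh : DifferentiableAt ℝ f (h + a)) :
    HasDerivAt (fun t => t * f (t + a) - ∫ x in a..t + a, f x) (h * deriv f (h + a)) h := by
  have hcomp := hfh.hasDerivAt.comp_add_const h a
  have hint := (hf.integral_hasStrictDerivAt a (h + a)).hasDerivAt.comp_add_const h a
  exact (((hasDerivAt_id' h).fun_mul hcomp).fun_sub hint).congr_deriv (by ring)

lemma monotoneOn_div_sq_of_hasDerivAt {N c : ℝ → ℝ}
    (hN : ∀ h > 0, HasDerivAt N (h * c h) h) (hle : ∀ h > 0, 2 * N h ≤ h ^ 2 * c h) :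
    MonotoneOn (fun h => N h / h ^ 2) (Ioi 0) := by
  have hU : ∀ h > (0 : ℝ), HasDerivAt (fun h => N h / h ^ 2)
      (h * (h ^ 2 * c h - 2 * N h) / (h ^ 2) ^ 2) h := fun h hh =>
    ((hN h hh).fun_div (hasDerivAt_pow 2 h) (by positivity)).congr_deriv (by push_cast; ring)
  refine monotoneOn_of_hasDerivWithinAt_nonneg (convex_Ioi 0)
    (f' := fun h => h * (h ^ 2 * c h - 2 * N h) / (h ^ 2) ^ 2)
    (fun h hh => (hU h hh).continuousAt.continuousWithinAt) ?_ ?_ <;> rw [interior_Ioi]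
  · exact fun h hh => (hU h hh).hasDerivWithinAt
  · exact fun h hh => div_nonneg (mul_nonneg hh.le (sub_nonneg.mpr (hle h hh))) (by positivity)

theorem stmt12_general (ft : ℝ → ℝ)
    (hdiff : Differentiable ℝ ft) (hconv : ConvexOn ℝ Set.univ ft)
    (dbar : ℝ) :
    MonotoneOn
      (fun h : ℝ =>
        (h * ft (h + dbar) - ∫ x in dbar..(h + dbar), ft x) / h ^ 2)
      (Set.Ioi (0:ℝ)) := by
  refine monotoneOn_div_sq_of_hasDerivAt (c := fun h => deriv ft (h + dbar))
    (fun h _ => hasDerivAt_mul_comp_add_sub_integral dbar h hdiff.continuous (hdiff _))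
    fun h hh => ?_
  have hbound := hconv.mul_sub_integral_le (hdiff (h + dbar)) (by linarith : dbar ≤ h + dbar)
  rw [add_sub_cancel_right] at hbound
  linarith

theorem stmt12 (ft : ℝ → ℝ) (hmono : Monotone ft)
    (hdiff : Differentiable ℝ ft) (hconv : ConvexOn ℝ Set.univ ft)
    (dbar : ℝ) (hd : 0 ≤ dbar) :
    MonotoneOn
      (fun h : ℝ =>
        (h * ft (h + dbar) - ∫ x in dbar..(h + dbar), ft x) / h ^ 2)
      (Set.Ioi (0:ℝ)) :=
  stmt12_general ft hdiff hconv dbar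
end
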